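/- arXiv:1907.05771 — 4 statements merged into one kernel-verified Lean document; each statement's English description precedes it below -/
import Mathlib

section
/- Let c ∈ ℝ, L ∈ ℝ with |c| ≤ L, and suppose z, s ∈ ℝ and y ∈ {0,1} satisfy z - s = c, 0 ≤ z ≤ y·L, and 0 ≤ s ≤ (1-y)·L. Then z = max(0, c). -/
section

variable {α : Type*}

theorem eq_zero_or_eq_zero_of_bigM [Ring α] [PartialOrder α] {y L z s : α}
    (hy : y = 0 ∨ y = 1) (hz0 : 0 ≤ z) (hzL : z ≤ y * L) (hs0 : 0 ≤ s)
    (hsL : s ≤ (1 - y) * L) : z = 0 ∨ s = 0 := by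
  rcases hy with rfl | rfl
  · exact .inl (le_antisymm (by simpa using hzL) hz0)
  · exact .inr (le_antisymm (by simpa using hsL) hs0)

theorem eq_max_zero_of_sub_eq_of_eq_zero_or_eq_zero [AddCommGroup α] [LinearOrder α]
    [IsOrderedAddMonoid α] {c z s : α} (hzs : z - s = c) (hz0 : 0 ≤ z) (hs0 : 0 ≤ s)
    (hcompl : z = 0 ∨ s = 0) : z = max 0 c := by
  rcases hcompl with rfl | rfl
  · rw [max_eq_left (by simpa [← hzs] using hs0)]
  · rw [← hzs, sub_zero, max_eq_right hz0]

end

theorem bigM_relu_unique_general (c L z s y : ℝ)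
    (hy : y = 0 ∨ y = 1) (hzs : z - s = c)
    (hz0 : 0 ≤ z) (hzL : z ≤ y * L) (hs0 : 0 ≤ s) (hsL : s ≤ (1 - y) * L) :
    z = max 0 c :=
  eq_max_zero_of_sub_eq_of_eq_zero_or_eq_zero hzs hz0 hs0
    (eq_zero_or_eq_zero_of_bigM hy hz0 hzL hs0 hsL)

theorem bigM_relu_unique (c L z s y : ℝ) (h : |c| ≤ L)
    (hy : y = 0 ∨ y = 1) (hzs : z - s = c)
    (hz0 : 0 ≤ z) (hzL : z ≤ y * L) (hs0 : 0 ≤ s) (hsL : s ≤ (1 - y) * L) :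
    z = max 0 c :=
  bigM_relu_unique_general c L z s y hy hzs hz0 hzL hs0 hsL
end

section
/- Let c ∈ ℝᵈ and L ∈ ℝ with |c_j| ≤ L for all j. The set of (z, s, y) ∈ ℝᵈ × ℝᵈ × {0,1}ᵈ satisfying z - s = c, 0 ≤ z ≤ y·L, and 0 ≤ s ≤ (1-y)·L (componentwise) is non-empty, and every element of this set satisfies z_j = max(0, c_j) for all j. -/
theorem bigM_relu_exists {c L : ℝ} (h : |c| ≤ L) :
    ∃ z s y : ℝ, (y = 0 ∨ y = 1) ∧ z - s = c ∧
      (0 ≤ z ∧ z ≤ y * L) ∧ (0 ≤ s ∧ s ≤ (1 - y) * L) := by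
  rcases le_total 0 c with hc | hc
  · refine ⟨c, 0, 1, Or.inr rfl, sub_zero c, ⟨hc, ?_⟩, ?_⟩ <;> norm_num
    exact (le_abs_self c).trans h
  · refine ⟨0, -c, 0, Or.inl rfl, by ring, by norm_num, ⟨neg_nonneg.mpr hc, ?_⟩⟩
    rw [sub_zero, one_mul]
    exact (neg_le_abs c).trans h

theorem bigM_relu_eq_max {c L z s y : ℝ} (hy : y = 0 ∨ y = 1) (hzs : z - s = c)
    (hz : 0 ≤ z ∧ z ≤ y * L) (hs : 0 ≤ s ∧ s ≤ (1 - y) * L) : z = max 0 c := by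
  rcases hy with rfl | rfl
  · have hz0 : z = 0 := le_antisymm (by simpa using hz.2) hz.1
    rw [hz0, max_eq_left (by linarith [hs.1])]
  · have hs0 : s = 0 := le_antisymm (by simpa using hs.2) hs.1
    rw [max_eq_right (by linarith [hz.1]), ← hzs, hs0, sub_zero]

theorem bigM_relu_vector (d : ℕ) (c : Fin d → ℝ) (L : ℝ)
    (h : ∀ j, |c j| ≤ L) :
    (∃ z s y : Fin d → ℝ, (∀ j, y j = 0 ∨ y j = 1) ∧
        (∀ j, z j - s j = c j) ∧
        (∀ j, 0 ≤ z j ∧ z j ≤ y j * L) ∧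
        (∀ j, 0 ≤ s j ∧ s j ≤ (1 - y j) * L)) ∧
    (∀ z s y : Fin d → ℝ, (∀ j, y j = 0 ∨ y j = 1) →
        (∀ j, z j - s j = c j) →
        (∀ j, 0 ≤ z j ∧ z j ≤ y j * L) →
        (∀ j, 0 ≤ s j ∧ s j ≤ (1 - y j) * L) →
        ∀ j, z j = max 0 (c j)) := by
  refine ⟨?_, fun z s y hy hzs hz hs j => bigM_relu_eq_max (hy j) (hzs j) (hz j) (hs j)⟩
  choose z s y hy hzs hz hs using fun j => bigM_relu_exists (h j)
  exact ⟨z, s, y, hy, hzs, hz, hs⟩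
end

section
/- Let N(x) = φ(W^{K-1}φ(...φ(W⁰x + b⁰)...) + b^{K-1}) be a K-layer ReLU network with φ(s) = max(0,s) componentwise, and suppose L bounds the absolute value of every pre-activation for every input x ∈ {0,1}^m. Then for every x ∈ {0,1}^m and every collection (z^k, s^k, y^k)_{k=1..K} satisfying z⁰ = x, z^k - s^k = W^{k-1}z^{k-1} + b^{k-1}, 0 ≤ z^k ≤ y^k·L, 0 ≤ s^k ≤ (1-y^k)·L, y^k binary, the final variable z^K equals N(x); moreover such a collection always exists. -/
/-!
Each layer's constraints are the big-M encoding of a ReLU `z = max 0 a` of the pre-activation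
`a`: the binary `y` forces either `z` or the slack `s` to vanish, and `z - s = a` then gives
`z = max 0 a`. Induction over the layers shows `z` is the network's output. Conversely, when
`|a| ≤ L` the choice `z = max 0 a`, `s = max 0 (-a)`, `y = [0 ≤ a]` is feasible, and taking it
along the actual forward pass gives a feasible point.
-/

/-- Output of layer `k` of a ReLU network (`layerOut ... 0 = x` is the input). -/
noncomputable def layerOut (d : ℕ → ℕ)
    (W : (k : ℕ) → Matrix (Fin (d (k + 1))) (Fin (d k)) ℝ)
    (b : (k : ℕ) → Fin (d (k + 1)) → ℝ) (x : Fin (d 0) → ℝ) :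
    (k : ℕ) → Fin (d k) → ℝ
  | 0 => x
  | k + 1 => fun j => max 0 (((W k).mulVec (layerOut d W b x k) + b k) j)

structure IsBigMRelu (L a z s y : ℝ) : Prop where
  binary : y = 0 ∨ y = 1
  sub_eq : z - s = a
  bounds_out : 0 ≤ z ∧ z ≤ y * L
  bounds_slack : 0 ≤ s ∧ s ≤ (1 - y) * L

namespace IsBigMRelu

variable {L a z s y : ℝ}

theorem eq_max (h : IsBigMRelu L a z s y) : z = max 0 a := by
  obtain ⟨hy | hy, hsub, ⟨hz0, hzL⟩, ⟨hs0, hsL⟩⟩ := h <;> subst hy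
  · have hz : z = 0 := le_antisymm (by simpa using hzL) hz0
    rw [hz, max_eq_left (by linarith)]
  · have hs : s = 0 := le_antisymm (by simpa using hsL) hs0
    rw [max_eq_right (by linarith)]
    linarith

theorem of_abs_le (ha : |a| ≤ L) :
    IsBigMRelu L a (max 0 a) (max 0 (-a)) (if 0 ≤ a then 1 else 0) := by
  obtain ⟨haL, haL'⟩ := abs_le.mp ha
  by_cases h : 0 ≤ a
  · simp only [if_pos h, max_eq_right h, max_eq_left (neg_nonpos.mpr h)]
    exact ⟨Or.inr rfl, by ring, ⟨h, by linarith⟩, ⟨le_rfl, by linarith⟩⟩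
  · rw [not_le] at h
    simp only [if_neg h.not_ge, max_eq_left h.le, max_eq_right (neg_nonneg.mpr h.le)]
    exact ⟨Or.inl rfl, by ring, ⟨le_rfl, by linarith⟩, ⟨by linarith, by linarith⟩⟩

end IsBigMRelu

def extendZero {β : ℕ → Type*} [∀ k, Zero (β k)] (f : ∀ k, β (k + 1)) : ∀ k, β k
  | 0 => 0
  | k + 1 => f k

section Network

variable {d : ℕ → ℕ} {W : (k : ℕ) → Matrix (Fin (d (k + 1))) (Fin (d k)) ℝ}
  {b : (k : ℕ) → Fin (d (k + 1)) → ℝ} {L : ℝ} {x : Fin (d 0) → ℝ}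

theorem eq_layerOut_of_isBigMRelu {K : ℕ} {z s y : (k : ℕ) → Fin (d k) → ℝ} (hz0 : z 0 = x)
    (h : ∀ k < K, ∀ j,
      IsBigMRelu L (((W k).mulVec (z k) + b k) j) (z (k + 1) j) (s (k + 1) j) (y (k + 1) j)) :
    ∀ k ≤ K, z k = layerOut d W b x k
  | 0, _ => hz0
  | k + 1, hk => by
    funext j
    rw [(h k hk j).eq_max, eq_layerOut_of_isBigMRelu hz0 h k (Nat.le_of_succ_le hk)]
    rfl

theorem exists_isBigMRelu_of_abs_le {K : ℕ}
    (hL : ∀ k < K, ∀ j, |((W k).mulVec (layerOut d W b x k) + b k) j| ≤ L) :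
    ∃ z s y : (k : ℕ) → Fin (d k) → ℝ, z 0 = x ∧ ∀ k < K, ∀ j,
      IsBigMRelu L (((W k).mulVec (z k) + b k) j) (z (k + 1) j) (s (k + 1) j) (y (k + 1) j) :=
  ⟨layerOut d W b x,
    extendZero fun k j => max 0 (-((W k).mulVec (layerOut d W b x k) + b k) j),
    extendZero fun k j => if 0 ≤ ((W k).mulVec (layerOut d W b x k) + b k) j then 1 else 0,
    rfl, fun k hk j => IsBigMRelu.of_abs_le (hL k hk j)⟩

end Network

theorem deep_relu_mip (K : ℕ) (d : ℕ → ℕ)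
    (W : (k : ℕ) → Matrix (Fin (d (k + 1))) (Fin (d k)) ℝ)
    (b : (k : ℕ) → Fin (d (k + 1)) → ℝ) (L : ℝ)
    (hL : ∀ x : Fin (d 0) → ℝ, (∀ j, x j = 0 ∨ x j = 1) →
      ∀ k < K, ∀ j, |((W k).mulVec (layerOut d W b x k) + b k) j| ≤ L)
    (x : Fin (d 0) → ℝ) (hx : ∀ j, x j = 0 ∨ x j = 1) :
    (∀ z s y : (k : ℕ) → Fin (d k) → ℝ,
        z 0 = x →
        (∀ k < K, ∀ j, y (k + 1) j = 0 ∨ y (k + 1) j = 1) →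
        (∀ k < K, ∀ j, z (k + 1) j - s (k + 1) j =
            ((W k).mulVec (z k) + b k) j) →
        (∀ k < K, ∀ j, 0 ≤ z (k + 1) j ∧ z (k + 1) j ≤ y (k + 1) j * L) →
        (∀ k < K, ∀ j, 0 ≤ s (k + 1) j ∧ s (k + 1) j ≤ (1 - y (k + 1) j) * L) →
        z K = layerOut d W b x K) ∧
    (∃ z s y : (k : ℕ) → Fin (d k) → ℝ,
        z 0 = x ∧
        (∀ k < K, ∀ j, y (k + 1) j = 0 ∨ y (k + 1) j = 1) ∧
        (∀ k < K, ∀ j, z (k + 1) j - s (k + 1) j =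
            ((W k).mulVec (z k) + b k) j) ∧
        (∀ k < K, ∀ j, 0 ≤ z (k + 1) j ∧ z (k + 1) j ≤ y (k + 1) j * L) ∧
        (∀ k < K, ∀ j, 0 ≤ s (k + 1) j ∧ s (k + 1) j ≤ (1 - y (k + 1) j) * L)) := by
  refine ⟨fun z s y hz0 hy hsub hz hs => ?_, ?_⟩
  · exact eq_layerOut_of_isBigMRelu hz0
      (fun k hk j => ⟨hy k hk j, hsub k hk j, hz k hk j, hs k hk j⟩) K le_rfl
  · obtain ⟨z, s, y, hz0, h⟩ := exists_isBigMRelu_of_abs_le (hL x hx)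
    exact ⟨z, s, y, hz0, fun k hk j => (h k hk j).binary, fun k hk j => (h k hk j).sub_eq,
      fun k hk j => (h k hk j).bounds_out, fun k hk j => (h k hk j).bounds_slack⟩
end

section
/- Let c ∈ ℝ^d, L ∈ ℝ₊ with |c_j| ≤ L for all j, and let P = {(z,s,y) ∈ ℝ^d × ℝ^d × {0,1}^d : z - s = c, 0 ≤ z ≤ y·L, 0 ≤ s ≤ (1-y)·L}. Then the projection of P onto the z-coordinate is the singleton {φ(c)} where φ(c)_j = max(0, c_j). -/
/-!
Coordinatewise, the binary `y` switches off one of the two nonnegative variables: `y = 0` forces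
`z = 0` and hence `c = -s ≤ 0`, while `y = 1` forces `s = 0` and hence `z = c ≥ 0`. Either way
`z = max 0 c`. Conversely `|c| ≤ L` makes the choice `y = 1, s = 0` (for `c ≥ 0`) or
`y = 0, s = -c` (for `c ≤ 0`) feasible.
-/

section BigM

variable {R : Type*} [CommRing R] [LinearOrder R] [IsStrictOrderedRing R] {L c z s y : R}

theorem eq_max_zero_of_bigM (hy : y = 0 ∨ y = 1) (hzs : z - s = c)
    (hz : 0 ≤ z ∧ z ≤ y * L) (hs : 0 ≤ s ∧ s ≤ (1 - y) * L) : z = max 0 c := by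
  rcases hy with rfl | rfl
  · have hz0 : z = 0 := le_antisymm (by simpa using hz.2) hz.1
    rw [hz0, max_eq_left (by linarith [hs.1])]
  · have hs0 : s = 0 := le_antisymm (by simpa using hs.2) hs.1
    rw [max_eq_right (by linarith [hz.1])]
    linarith

theorem exists_bigM_of_abs_le (h : |c| ≤ L) :
    ∃ s y : R, (y = 0 ∨ y = 1) ∧ max 0 c - s = c ∧
      (0 ≤ max 0 c ∧ max 0 c ≤ y * L) ∧ (0 ≤ s ∧ s ≤ (1 - y) * L) := by
  rcases le_total 0 c with hc | hc
  · refine ⟨0, 1, Or.inr rfl, by simp [hc], ⟨le_max_left _ _, ?_⟩, by simp⟩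
    simpa [hc, abs_of_nonneg hc] using h
  · refine ⟨-c, 0, Or.inl rfl, by simp [hc], by simp [hc], ⟨by linarith, ?_⟩⟩
    simpa [abs_of_nonpos hc] using h

end BigM

theorem bigM_relu_projection_general (d : ℕ) (c : Fin d → ℝ) (L : ℝ)
    (h : ∀ j, |c j| ≤ L) :
    {z : Fin d → ℝ | ∃ s y : Fin d → ℝ, (∀ j, y j = 0 ∨ y j = 1) ∧
        (∀ j, z j - s j = c j) ∧
        (∀ j, 0 ≤ z j ∧ z j ≤ y j * L) ∧
        (∀ j, 0 ≤ s j ∧ s j ≤ (1 - y j) * L)} =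
      {fun j => max 0 (c j)} := by
  ext z
  simp only [Set.mem_ofPred_eq, Set.mem_singleton_iff]
  constructor
  · rintro ⟨s, y, hy, hzs, hz, hs⟩
    funext j
    exact eq_max_zero_of_bigM (hy j) (hzs j) (hz j) (hs j)
  · rintro rfl
    choose s y hy hzs hz hs using fun j => exists_bigM_of_abs_le (h j)
    exact ⟨s, y, hy, hzs, hz, hs⟩

theorem bigM_relu_projection (d : ℕ) (c : Fin d → ℝ) (L : ℝ) (hL : 0 ≤ L)
    (h : ∀ j, |c j| ≤ L) :
    {z : Fin d → ℝ | ∃ s y : Fin d → ℝ, (∀ j, y j = 0 ∨ y j = 1) ∧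
        (∀ j, z j - s j = c j) ∧
        (∀ j, 0 ≤ z j ∧ z j ≤ y j * L) ∧
        (∀ j, 0 ≤ s j ∧ s j ≤ (1 - y j) * L)} =
      {fun j => max 0 (c j)} :=
  bigM_relu_projection_general d c L h
end
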